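/- arXiv:2305.02999 — 2 statements merged into one kernel-verified Lean document; each statement's English description precedes it below -/
import Mathlib

section
/- Let χ₁ and χ₂ be orthonormal vectors in ℂ²⊗ℂ² whose rank-one projections have equal partial traces on both subsystems (Tr₁ |χ₁⟩⟨χ₁| = Tr₁ |χ₂⟩⟨χ₂| and Tr₂ |χ₁⟩⟨χ₁| = Tr₂ |χ₂⟩⟨χ₂|). For p ∈ [0,1], set ρ(p) = p|χ₁⟩⟨χ₁| + (1−p)|χ₂⟩⟨χ₂|. Then Tr₁ ρ(p) = Tr₂ ρ(p) = (1/2)·I₂ for every p, and the eigenvalues of the Hermitian matrix ρ(p) are exactly p, 1−p, 0, 0 (with multiplicity). Consequently the von Neumann entropy of ρ(p), namely −p·log₂ p − (1−p)·log₂(1−p), is strictly less than the local entropy 1 = S((1/2)I₂) whenever p ≠ 1/2, with equality exactly at p = 1/2. -/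
/-!
Write χ₁, χ₂ as 2×2 coefficient matrices V, W, so that the marginals of |χ₁⟩⟨χ₁| are V Vᴴ and
(Vᴴ V)ᵀ. For B = Vᴴ V and T = Vᴴ W the masking conditions give T B = B T and Tᴴ T = B², and
orthogonality gives tr T = 0. In an eigenbasis of B with distinct eigenvalues T would be diagonal
and traceless, so the two eigenvalues would have equal squares; since they sum to 1, B = I/2, and
symmetrically V Vᴴ = I/2. The spectrum comes from ρ(p) = A B with B A = diag(p, 1 − p), and the
entropy is the binary entropy in bits, maximal exactly at 1/2.
-/

open Matrix Kronecker Polynomial ComplexOrder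

noncomputable section

/-- Partial trace over the first subsystem of a two-qubit (4×4) matrix. -/
def ptr1 (M : Matrix (Fin 2 × Fin 2) (Fin 2 × Fin 2) ℂ) : Matrix (Fin 2) (Fin 2) ℂ :=
  Matrix.of fun j l => ∑ i, M (i, j) (i, l)

/-- Partial trace over the second subsystem of a two-qubit (4×4) matrix. -/
def ptr2 (M : Matrix (Fin 2 × Fin 2) (Fin 2 × Fin 2) ℂ) : Matrix (Fin 2) (Fin 2) ℂ :=
  Matrix.of fun i k => ∑ j, M (i, j) (k, j)

/-- Rank-one projection |v⟩⟨v| of a qubit vector. -/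
def proj2 (v : Fin 2 → ℂ) : Matrix (Fin 2) (Fin 2) ℂ :=
  Matrix.of fun i j => v i * star (v j)

/-- Rank-one projection |v⟩⟨v| of a two-qubit vector. -/
def proj4 (v : Fin 2 × Fin 2 → ℂ) : Matrix (Fin 2 × Fin 2) (Fin 2 × Fin 2) ℂ :=
  Matrix.of fun p q => v p * star (v q)

/-- Kronecker (tensor) product of two qubit vectors. -/
def tens (a b : Fin 2 → ℂ) : Fin 2 × Fin 2 → ℂ := fun p => a p.1 * b p.2

/-- Unit (normalized) vector. -/
def UnitVec {α : Type*} [Fintype α] (v : α → ℂ) : Prop := ∑ i, v i * star (v i) = 1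

/-- Hermitian inner product of two-qubit vectors. -/
def inner4 (v w : Fin 2 × Fin 2 → ℂ) : ℂ := ∑ p, star (v p) * w p

/-- A 2×2 density matrix: positive semidefinite with unit trace. -/
def IsDensity2 (A : Matrix (Fin 2) (Fin 2) ℂ) : Prop := A.PosSemidef ∧ A.trace = 1

/-- Separability of a two-qubit density matrix: a finite convex combination of
Kronecker products of 2×2 density matrices. -/
def Separable4 (ρ : Matrix (Fin 2 × Fin 2) (Fin 2 × Fin 2) ℂ) : Prop :=
  ∃ (n : ℕ) (w : Fin n → ℝ) (A B : Fin n → Matrix (Fin 2) (Fin 2) ℂ),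
    (∀ i, 0 ≤ w i) ∧ (∑ i, w i = 1) ∧
    (∀ i, IsDensity2 (A i)) ∧ (∀ i, IsDensity2 (B i)) ∧
    ρ = ∑ i, (w i : ℂ) • (A i ⊗ₖ B i)

/-- Standard basis vector e₀ of ℂ². -/
def e₀ : Fin 2 → ℂ := ![1, 0]

/-- Standard basis vector e₁ of ℂ². -/
def e₁ : Fin 2 → ℂ := ![0, 1]

/-- The masked mixture ρ(p) = p|χ₁⟩⟨χ₁| + (1−p)|χ₂⟩⟨χ₂|. -/
def mix (χ₁ χ₂ : Fin 2 × Fin 2 → ℂ) (p : ℝ) : Matrix (Fin 2 × Fin 2) (Fin 2 × Fin 2) ℂ :=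
  (p : ℂ) • proj4 χ₁ + (1 - (p : ℂ)) • proj4 χ₂

theorem sq_eq_sq_of_commute_diagonal {d : Fin 2 → ℂ} {T : Matrix (Fin 2) (Fin 2) ℂ}
    (hcomm : Commute T (diagonal d)) (hsq : Tᴴ * T = diagonal d * diagonal d)
    (htr : T.trace = 0) : d 0 ^ 2 = d 1 ^ 2 := by
  by_cases hd : d 0 = d 1
  · rw [hd]
  have hd' : d 1 - d 0 ≠ 0 := sub_ne_zero.mpr (Ne.symm hd)
  have hc01 := congrFun₂ hcomm.eq 0 1
  have hc10 := congrFun₂ hcomm.eq 1 0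
  simp only [mul_diagonal, diagonal_mul] at hc01 hc10
  have hoff : T 0 1 = 0 ∧ T 1 0 = 0 := by
    constructor <;> refine (mul_eq_zero.mp ?_).resolve_right hd'
    · linear_combination hc01
    · linear_combination -hc10
  have h00 := congrFun₂ hsq 0 0
  have h11 := congrFun₂ hsq 1 1
  have hT11 : T 1 1 = -T 0 0 := by linear_combination (trace_fin_two T).symm.trans htr
  simp only [mul_apply, conjTranspose_apply, RCLike.star_def, Fin.sum_univ_two, hoff, hT11,
    diagonal_apply_eq, map_zero, map_neg, mul_zero, add_zero, neg_mul, mul_neg, neg_neg] at h00 h11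
  linear_combination h11 - h00

theorem eq_half_smul_one_of_commute {B T : Matrix (Fin 2) (Fin 2) ℂ} (hB : B.IsHermitian)
    (htrB : B.trace = 1) (hcomm : Commute T B) (hsq : Tᴴ * T = B * B) (htrT : T.trace = 0) :
    B = (1 / 2 : ℂ) • 1 := by
  set φ := Unitary.conjStarAlgAut ℂ _ (star hB.eigenvectorUnitary)
  set d : Fin 2 → ℂ := RCLike.ofReal ∘ hB.eigenvalues
  have hφB : φ B = diagonal d := hB.conjStarAlgAut_star_eigenvectorUnitary
  have htr : ∀ M, (φ M).trace = M.trace := by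
    intro M
    simp only [φ, Unitary.conjStarAlgAut_apply, Unitary.coe_star, star_star, trace_mul_cycle,
      SetLike.coe_mem, Unitary.mul_star_self_of_mem, one_mul]
  have hsq' : d 0 ^ 2 = d 1 ^ 2 := by
    refine sq_eq_sq_of_commute_diagonal (T := φ T) ?_ ?_ ?_
    · rw [← hφB]; exact hcomm.map φ
    · rw [← hφB, ← map_mul, ← hsq, map_mul, ← star_eq_conjTranspose, ← map_star,
        star_eq_conjTranspose]
    · rw [htr, htrT]
  have hsum : d 0 + d 1 = 1 := by
    rw [← htrB, ← htr, hφB, trace_diagonal, Fin.sum_univ_two]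
  have hd : diagonal d = (1 / 2 : ℂ) • 1 := by
    have h01 : d 0 - d 1 = 0 := by linear_combination hsq' - (d 0 - d 1) * hsum
    have hd0 : d 0 = 1 / 2 := by linear_combination (hsum + h01) / 2
    have hd1 : d 1 = 1 / 2 := by linear_combination (hsum - h01) / 2
    ext i j
    fin_cases i <;> fin_cases j <;> simp [hd0, hd1]
  apply EquivLike.injective φ
  rw [hφB, map_smul, map_one, hd]

theorem conjTranspose_mul_self_eq_half_smul_one {V W : Matrix (Fin 2) (Fin 2) ℂ}
    (hV : (Vᴴ * V).trace = 1) (horth : (Vᴴ * W).trace = 0)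
    (hleft : V * Vᴴ = W * Wᴴ) (hright : Vᴴ * V = Wᴴ * W) :
    Vᴴ * V = (1 / 2 : ℂ) • 1 := by
  refine eq_half_smul_one_of_commute (T := Vᴴ * W) (isHermitian_conjTranspose_mul_self V) hV
    ?_ ?_ horth
  · calc Vᴴ * W * (Vᴴ * V) = Vᴴ * (W * Wᴴ) * W := by rw [hright]; noncomm_ring
      _ = Vᴴ * V * (Vᴴ * W) := by rw [← hleft]; noncomm_ring
  · calc (Vᴴ * W)ᴴ * (Vᴴ * W) = Wᴴ * (V * Vᴴ) * W := by
          rw [conjTranspose_mul, conjTranspose_conjTranspose]; noncomm_ring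
      _ = Vᴴ * V * (Vᴴ * V) := by rw [hleft, hright]; noncomm_ring

theorem mul_conjTranspose_self_eq_half_smul_one {V W : Matrix (Fin 2) (Fin 2) ℂ}
    (hV : (Vᴴ * V).trace = 1) (horth : (Vᴴ * W).trace = 0)
    (hleft : V * Vᴴ = W * Wᴴ) (hright : Vᴴ * V = Wᴴ * W) :
    V * Vᴴ = (1 / 2 : ℂ) • 1 := by
  have horth' : (V * Wᴴ).trace = 0 := by
    rw [trace_mul_comm, show Wᴴ * V = (Vᴴ * W)ᴴ by simp [conjTranspose_mul],
      trace_conjTranspose, horth, star_zero]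
  simpa only [conjTranspose_conjTranspose] using
    conjTranspose_mul_self_eq_half_smul_one (V := Vᴴ) (W := Wᴴ)
      (by rwa [conjTranspose_conjTranspose, trace_mul_comm]) (by simpa using horth')
      (by simpa using hright) (by simpa using hleft)

def coeffMatrix (v : Fin 2 × Fin 2 → ℂ) : Matrix (Fin 2) (Fin 2) ℂ := Matrix.of (Function.curry v)

theorem ptr2_proj4 (v : Fin 2 × Fin 2 → ℂ) :
    ptr2 (proj4 v) = coeffMatrix v * (coeffMatrix v)ᴴ := by
  ext i k
  simp [ptr2, proj4, coeffMatrix, mul_apply]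

theorem ptr1_proj4 (v : Fin 2 × Fin 2 → ℂ) :
    ptr1 (proj4 v) = ((coeffMatrix v)ᴴ * coeffMatrix v)ᵀ := by
  ext j l
  simp [ptr1, proj4, coeffMatrix, mul_apply, mul_comm]

theorem trace_conjTranspose_coeffMatrix_mul (v w : Fin 2 × Fin 2 → ℂ) :
    ((coeffMatrix v)ᴴ * coeffMatrix w).trace = inner4 v w := by
  rw [inner4, Fintype.sum_prod_type, Finset.sum_comm]
  rfl

theorem inner4_self_of_unitVec {v : Fin 2 × Fin 2 → ℂ} (hv : UnitVec v) : inner4 v v = 1 := by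
  rw [← hv, inner4]
  exact Finset.sum_congr rfl fun _ _ => mul_comm _ _

theorem ptr_proj4_eq_half_smul_one {χ₁ χ₂ : Fin 2 × Fin 2 → ℂ} (h₁ : UnitVec χ₁)
    (horth : inner4 χ₁ χ₂ = 0)
    (hmask1 : ptr1 (proj4 χ₁) = ptr1 (proj4 χ₂))
    (hmask2 : ptr2 (proj4 χ₁) = ptr2 (proj4 χ₂)) :
    ptr1 (proj4 χ₁) = (1 / 2 : ℂ) • 1 ∧ ptr2 (proj4 χ₁) = (1 / 2 : ℂ) • 1 := by
  set V := coeffMatrix χ₁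
  set W := coeffMatrix χ₂
  have hV : (Vᴴ * V).trace = 1 := by
    rw [trace_conjTranspose_coeffMatrix_mul, inner4_self_of_unitVec h₁]
  have hVW : (Vᴴ * W).trace = 0 := by rw [trace_conjTranspose_coeffMatrix_mul, horth]
  have hleft : V * Vᴴ = W * Wᴴ := by rwa [ptr2_proj4, ptr2_proj4] at hmask2
  have hright : Vᴴ * V = Wᴴ * W := by
    rwa [ptr1_proj4, ptr1_proj4, transpose_inj] at hmask1
  constructor
  · rw [ptr1_proj4, conjTranspose_mul_self_eq_half_smul_one hV hVW hleft hright,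
      transpose_smul, transpose_one]
  · rw [ptr2_proj4, mul_conjTranspose_self_eq_half_smul_one hV hVW hleft hright]

theorem ptr1_mix (χ₁ χ₂ : Fin 2 × Fin 2 → ℂ) (p : ℝ) :
    ptr1 (mix χ₁ χ₂ p) = (p : ℂ) • ptr1 (proj4 χ₁) + (1 - (p : ℂ)) • ptr1 (proj4 χ₂) := by
  ext j l
  simp [ptr1, mix, Finset.sum_add_distrib, mul_add]

theorem ptr2_mix (χ₁ χ₂ : Fin 2 × Fin 2 → ℂ) (p : ℝ) :
    ptr2 (mix χ₁ χ₂ p) = (p : ℂ) • ptr2 (proj4 χ₁) + (1 - (p : ℂ)) • ptr2 (proj4 χ₂) := by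
  ext j l
  simp [ptr2, mix, Finset.sum_add_distrib, mul_add]

theorem charpoly_sum_smul_vecMulVec {R m n : Type*} [CommRing R] [Fintype m] [DecidableEq m]
    [Fintype n] [DecidableEq n] (u v : m → n → R) (w : m → R)
    (hbiorth : ∀ k l, v k ⬝ᵥ u l = if k = l then 1 else 0) :
    X ^ Fintype.card m * (∑ k, w k • vecMulVec (u k) (v k)).charpoly
      = X ^ Fintype.card n * ∏ k, (X - C (w k)) := by
  have hsum : ∑ k, w k • vecMulVec (u k) (v k) = (of u)ᵀ * (diagonal w * of v) := by
    ext i j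
    rw [Matrix.sum_apply, mul_apply]
    refine Finset.sum_congr rfl fun k _ => ?_
    simp only [Matrix.smul_apply, vecMulVec_apply, transpose_apply, of_apply, diagonal_mul,
      smul_eq_mul]
    ring
  have hdual : of v * (of u)ᵀ = 1 := by
    ext k l
    simpa [mul_apply, one_apply, dotProduct] using hbiorth k l
  rw [hsum, charpoly_mul_comm', Matrix.mul_assoc, hdual, Matrix.mul_one, charpoly_diagonal]

theorem proj4_eq_vecMulVec (v : Fin 2 × Fin 2 → ℂ) : proj4 v = vecMulVec v (star v) := by
  ext; simp [proj4, vecMulVec_apply]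

theorem star_inner4 (v w : Fin 2 × Fin 2 → ℂ) : star (inner4 v w) = inner4 w v := by
  simp [inner4, star_sum, mul_comm]

theorem charpoly_mix {χ₁ χ₂ : Fin 2 × Fin 2 → ℂ} (h₁ : UnitVec χ₁) (h₂ : UnitVec χ₂)
    (horth : inner4 χ₁ χ₂ = 0) (p : ℝ) :
    (mix χ₁ χ₂ p).charpoly = (X - C (p : ℂ)) * (X - C (1 - (p : ℂ))) * X ^ 2 := by
  have hbiorth : ∀ k l : Fin 2,
      ![star χ₁, star χ₂] k ⬝ᵥ ![χ₁, χ₂] l = if k = l then 1 else 0 := by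
    have h21 : inner4 χ₂ χ₁ = 0 := by rw [← star_inner4, horth, star_zero]
    intro k l
    fin_cases k <;> fin_cases l
    exacts [inner4_self_of_unitVec h₁, horth, h21, inner4_self_of_unitVec h₂]
  have hsum := charpoly_sum_smul_vecMulVec _ _ ![(p : ℂ), 1 - p] hbiorth
  have hmix : ∑ k, ![(p : ℂ), 1 - p] k • vecMulVec (![χ₁, χ₂] k) (![star χ₁, star χ₂] k)
      = mix χ₁ χ₂ p := by
    simp [Fin.sum_univ_two, mix, proj4_eq_vecMulVec]
  rw [hmix, Fin.prod_univ_two, Fintype.card_fin, Fintype.card_prod, Fintype.card_fin] at hsum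
  refine mul_left_cancel₀ (pow_ne_zero 2 X_ne_zero) ?_
  rw [hsum]
  simp only [Matrix.cons_val_zero, Matrix.cons_val_one]
  ring

theorem neg_mul_logb_sub_eq_binEntropy_div (p : ℝ) :
    -(p * Real.logb 2 p) - (1 - p) * Real.logb 2 (1 - p) = Real.binEntropy p / Real.log 2 := by
  rw [Real.binEntropy_eq_negMulLog_add_negMulLog_one_sub]
  simp only [Real.negMulLog, Real.logb]
  ring

theorem entropy_of_masked_mixture_of_orthogonal_states_general
    (χ₁ χ₂ : Fin 2 × Fin 2 → ℂ)
    (h₁ : UnitVec χ₁) (h₂ : UnitVec χ₂)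
    (horth : inner4 χ₁ χ₂ = 0)
    (hmask1 : ptr1 (proj4 χ₁) = ptr1 (proj4 χ₂))
    (hmask2 : ptr2 (proj4 χ₁) = ptr2 (proj4 χ₂))
    (p : ℝ) :
    ptr1 (mix χ₁ χ₂ p) = (1/2 : ℂ) • (1 : Matrix (Fin 2) (Fin 2) ℂ) ∧
    ptr2 (mix χ₁ χ₂ p) = (1/2 : ℂ) • (1 : Matrix (Fin 2) (Fin 2) ℂ) ∧
    (mix χ₁ χ₂ p).charpoly
      = (X - C ((p : ℂ))) * (X - C (1 - (p : ℂ))) * X ^ 2 ∧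
    (p ≠ 1/2 → -(p * Real.logb 2 p) - (1 - p) * Real.logb 2 (1 - p) < 1) ∧
    (p = 1/2 → -(p * Real.logb 2 p) - (1 - p) * Real.logb 2 (1 - p) = 1) := by
  obtain ⟨hptr1, hptr2⟩ := ptr_proj4_eq_half_smul_one h₁ horth hmask1 hmask2
  have hlog2 : 0 < Real.log 2 := Real.log_pos one_lt_two
  refine ⟨?_, ?_, charpoly_mix h₁ h₂ horth p, fun hp => ?_, fun hp => ?_⟩
  · rw [ptr1_mix, ← hmask1, ← add_smul, add_sub_cancel, one_smul, hptr1]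
  · rw [ptr2_mix, ← hmask2, ← add_smul, add_sub_cancel, one_smul, hptr2]
  · rw [neg_mul_logb_sub_eq_binEntropy_div, div_lt_one hlog2, Real.binEntropy_lt_log_two]
    rwa [← one_div]
  · rw [neg_mul_logb_sub_eq_binEntropy_div, div_eq_one_iff_eq hlog2.ne', hp, one_div,
      Real.binEntropy_two_inv]

/-- for orthonormal masked states, the mixture ρ(p) has maximally mixed
marginals, eigenvalues p, 1−p, 0, 0 (stated via the characteristic polynomial), and its
von Neumann entropy −p·log₂p −(1−p)·log₂(1−p) is < 1 for p ≠ 1/2, = 1 at p = 1/2. -/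
theorem entropy_of_masked_mixture_of_orthogonal_states
    (χ₁ χ₂ : Fin 2 × Fin 2 → ℂ)
    (h₁ : UnitVec χ₁) (h₂ : UnitVec χ₂)
    (horth : inner4 χ₁ χ₂ = 0)
    (hmask1 : ptr1 (proj4 χ₁) = ptr1 (proj4 χ₂))
    (hmask2 : ptr2 (proj4 χ₁) = ptr2 (proj4 χ₂))
    (p : ℝ) (hp : p ∈ Set.Icc (0 : ℝ) 1) :
    ptr1 (mix χ₁ χ₂ p) = (1/2 : ℂ) • (1 : Matrix (Fin 2) (Fin 2) ℂ) ∧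
    ptr2 (mix χ₁ χ₂ p) = (1/2 : ℂ) • (1 : Matrix (Fin 2) (Fin 2) ℂ) ∧
    (mix χ₁ χ₂ p).charpoly
      = (X - C ((p : ℂ))) * (X - C (1 - (p : ℂ))) * X ^ 2 ∧
    (p ≠ 1/2 → -(p * Real.logb 2 p) - (1 - p) * Real.logb 2 (1 - p) < 1) ∧
    (p = 1/2 → -(p * Real.logb 2 p) - (1 - p) * Real.logb 2 (1 - p) = 1) :=
  entropy_of_masked_mixture_of_orthogonal_states_general χ₁ χ₂ h₁ h₂ horth hmask1 hmask2 p

end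
end

section
/- For θ ∈ [0, π/2), with τ₀ = cos(θ/2)e₀ + sin(θ/2)e₁, τ₁ = sin(θ/2)e₀ + cos(θ/2)e₁, Σ'₁ = (1/√2)(e₀ ⊗ τ₀ + e₁ ⊗ τ₁), and Σ'₂ = (1/√2)(e₀ ⊗ τ₁ + e₁ ⊗ τ₀), consider the two-qubit state κ'(p) = p|Σ'₁⟩⟨Σ'₁| + (1−p)|Σ'₂⟩⟨Σ'₂| for p ∈ [0,1]. For every p ≠ 1/2 and every θ ∈ [0, π/2), the state κ'(p) is NOT separable (it is entangled). That is, the masked states of classical mixtures of two single-qubit pure non-commuting states are entangled for all unequal mixing weights. -/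
open Matrix Kronecker Polynomial ComplexOrder

noncomputable section

/-- τ₀-type vector: cos(t/2)e₀ + sin(t/2)e₁. -/
def tau0 (t : ℝ) : Fin 2 → ℂ := ![(Real.cos (t/2) : ℂ), (Real.sin (t/2) : ℂ)]

/-- τ₁-type vector: sin(t/2)e₀ + cos(t/2)e₁. -/
def tau1 (t : ℝ) : Fin 2 → ℂ := ![(Real.sin (t/2) : ℂ), (Real.cos (t/2) : ℂ)]

/-- Σ'₁ = (1/√2)(e₀ ⊗ τ₀ + e₁ ⊗ τ₁). -/
def sig1' (t : ℝ) : Fin 2 × Fin 2 → ℂ :=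
  fun q => ((Real.sqrt 2)⁻¹ : ℂ) * (tens e₀ (tau0 t) q + tens e₁ (tau1 t) q)

/-- Σ'₂ = (1/√2)(e₀ ⊗ τ₁ + e₁ ⊗ τ₀). -/
def sig2' (t : ℝ) : Fin 2 × Fin 2 → ℂ :=
  fun q => ((Real.sqrt 2)⁻¹ : ℂ) * (tens e₀ (tau1 t) q + tens e₁ (tau0 t) q)

/-- The common reduced state: diagonal entries 1/2, off-diagonal entries (sin θ)/2. -/
def redMat (t : ℝ) : Matrix (Fin 2) (Fin 2) ℂ :=
  !![(1/2 : ℂ), ((Real.sin t / 2 : ℝ) : ℂ); ((Real.sin t / 2 : ℝ) : ℂ), (1/2 : ℂ)]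

/-- κ'(p) = p|Σ'₁⟩⟨Σ'₁| + (1−p)|Σ'₂⟩⟨Σ'₂|. -/
def kappa' (t p : ℝ) : Matrix (Fin 2 × Fin 2) (Fin 2 × Fin 2) ℂ :=
  (p : ℂ) • proj4 (sig1' t) + (1 - (p : ℂ)) • proj4 (sig2' t)

/-! The argument is the Peres–Horodecki criterion. Partial transposition sends a product `A ⊗ B`
of density matrices to `A ⊗ Bᵀ`, which is again positive semidefinite, so the partial transpose
of a separable state is positive semidefinite. For `κ'(p)` its quadratic forms at the Bell
vectors `|00⟩ - |11⟩` and `|01⟩ - |10⟩` are `(2p - 1) cos θ` and `(1 - 2p) cos θ`; as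
`cos θ > 0` on `[0, π/2)`, one of them is negative once `p ≠ 1/2`. -/

namespace Matrix

variable {ι m n R : Type*}

def partialTranspose (M : Matrix (m × n) (m × n) R) : Matrix (m × n) (m × n) R :=
  of fun p q => M (p.1, q.2) (q.1, p.2)

@[simp]
lemma partialTranspose_apply (M : Matrix (m × n) (m × n) R) (p q : m × n) :
    M.partialTranspose p q = M (p.1, q.2) (q.1, p.2) := rfl

lemma partialTranspose_kronecker [Mul R] (A : Matrix m m R) (B : Matrix n n R) :
    (A ⊗ₖ B).partialTranspose = A ⊗ₖ Bᵀ := by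
  ext ⟨i, j⟩ ⟨k, l⟩
  simp

lemma partialTranspose_smul {α : Type*} [SMul α R] (c : α) (M : Matrix (m × n) (m × n) R) :
    (c • M).partialTranspose = c • M.partialTranspose := rfl

lemma partialTranspose_sum [AddCommMonoid R] (s : Finset ι) (M : ι → Matrix (m × n) (m × n) R) :
    (∑ i ∈ s, M i).partialTranspose = ∑ i ∈ s, (M i).partialTranspose := by
  ext
  simp [sum_apply]

theorem PosSemidef.partialTranspose_sum_smul_kronecker {𝕜 : Type*} [RCLike 𝕜] [Fintype m]
    [Fintype n] (s : Finset ι) {w : ι → ℝ} {A : ι → Matrix m m 𝕜} {B : ι → Matrix n n 𝕜}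
    (hw : ∀ i ∈ s, 0 ≤ w i) (hA : ∀ i ∈ s, (A i).PosSemidef) (hB : ∀ i ∈ s, (B i).PosSemidef) :
    (∑ i ∈ s, (w i : 𝕜) • (A i ⊗ₖ B i)).partialTranspose.PosSemidef := by
  rw [partialTranspose_sum]
  refine posSemidef_sum s fun i hi => ?_
  rw [partialTranspose_smul, partialTranspose_kronecker]
  exact ((hA i hi).kronecker (hB i hi).transpose).smul (RCLike.ofReal_nonneg.mpr (hw i hi))

end Matrix

theorem Separable4.posSemidef_partialTranspose {ρ : Matrix (Fin 2 × Fin 2) (Fin 2 × Fin 2) ℂ}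
    (h : Separable4 ρ) : ρ.partialTranspose.PosSemidef := by
  obtain ⟨n, w, A, B, hw, -, hA, hB, rfl⟩ := h
  exact PosSemidef.partialTranspose_sum_smul_kronecker _ (fun i _ => hw i) (fun i _ => (hA i).1)
    (fun i _ => (hB i).1)

def phiMinus : Fin 2 × Fin 2 → ℂ := tens e₀ e₀ - tens e₁ e₁

def psiMinus : Fin 2 × Fin 2 → ℂ := tens e₀ e₁ - tens e₁ e₀

lemma Complex.inv_ofReal_sqrt_two_sq : (Real.sqrt 2 : ℂ)⁻¹ ^ 2 = 1 / 2 := by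
  rw [inv_pow, ← Complex.ofReal_pow, Real.sq_sqrt zero_le_two]
  norm_num

lemma Complex.ofReal_cos_eq_cos_half_sq_sub_sin_half_sq (t : ℝ) :
    (Real.cos t : ℂ) = (Real.cos (t / 2) : ℂ) ^ 2 - (Real.sin (t / 2) : ℂ) ^ 2 := by
  rw [← Complex.ofReal_pow, ← Complex.ofReal_pow, ← Complex.ofReal_sub, ← Real.cos_two_mul',
    mul_div_cancel₀ t two_ne_zero]

lemma dotProduct_partialTranspose_phiMinus (M : Matrix (Fin 2 × Fin 2) (Fin 2 × Fin 2) ℂ) :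
    star phiMinus ⬝ᵥ M.partialTranspose *ᵥ phiMinus
      = M (0, 0) (0, 0) - M (0, 1) (1, 0) - M (1, 0) (0, 1) + M (1, 1) (1, 1) := by
  simp only [dotProduct, mulVec, Fintype.sum_prod_type, Fin.sum_univ_two, partialTranspose_apply,
    phiMinus, tens, e₀, e₁, Pi.sub_apply, Pi.star_apply, cons_val_zero, cons_val_one,
    cons_val_fin_one, star_sub, star_mul', star_one, star_zero]
  ring

lemma dotProduct_partialTranspose_psiMinus (M : Matrix (Fin 2 × Fin 2) (Fin 2 × Fin 2) ℂ) :
    star psiMinus ⬝ᵥ M.partialTranspose *ᵥ psiMinus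
      = M (0, 1) (0, 1) - M (0, 0) (1, 1) - M (1, 1) (0, 0) + M (1, 0) (1, 0) := by
  simp only [dotProduct, mulVec, Fintype.sum_prod_type, Fin.sum_univ_two, partialTranspose_apply,
    psiMinus, tens, e₀, e₁, Pi.sub_apply, Pi.star_apply, cons_val_zero, cons_val_one,
    cons_val_fin_one, star_sub, star_mul', star_one, star_zero]
  ring

lemma dotProduct_partialTranspose_kappa'_phiMinus (t p : ℝ) :
    star phiMinus ⬝ᵥ (kappa' t p).partialTranspose *ᵥ phiMinus =
      ((2 * p - 1) * Real.cos t : ℝ) := by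
  rw [dotProduct_partialTranspose_phiMinus]
  simp only [kappa', proj4, sig1', sig2', tens, e₀, e₁, tau0, tau1, star_mul', star_inv₀,
    RCLike.star_def, Complex.conj_ofReal, star_add, smul_of, Complex.coe_smul, Matrix.add_apply,
    of_apply, Pi.smul_apply, cons_val_zero, cons_val_one, cons_val_fin_one, one_mul, zero_mul,
    add_zero, zero_add, map_one, map_zero, Complex.real_smul, smul_eq_mul, Complex.ofReal_mul,
    Complex.ofReal_sub, Complex.ofReal_one, Complex.ofReal_ofNat]
  linear_combination (2 * (2 * p - 1) * ((Real.cos (t / 2) : ℂ) ^ 2 - (Real.sin (t / 2) : ℂ) ^ 2)) *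
    Complex.inv_ofReal_sqrt_two_sq -
    (2 * p - 1) * Complex.ofReal_cos_eq_cos_half_sq_sub_sin_half_sq t

lemma dotProduct_partialTranspose_kappa'_psiMinus (t p : ℝ) :
    star psiMinus ⬝ᵥ (kappa' t p).partialTranspose *ᵥ psiMinus =
      ((1 - 2 * p) * Real.cos t : ℝ) := by
  rw [dotProduct_partialTranspose_psiMinus]
  simp only [kappa', proj4, sig1', sig2', tens, e₀, e₁, tau0, tau1, star_mul', star_inv₀,
    RCLike.star_def, Complex.conj_ofReal, star_add, smul_of, Complex.coe_smul, Matrix.add_apply,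
    of_apply, Pi.smul_apply, cons_val_zero, cons_val_one, cons_val_fin_one, one_mul, zero_mul,
    add_zero, zero_add, map_one, map_zero, Complex.real_smul, smul_eq_mul, Complex.ofReal_mul,
    Complex.ofReal_sub, Complex.ofReal_one, Complex.ofReal_ofNat]
  linear_combination (2 * (1 - 2 * p) * ((Real.cos (t / 2) : ℂ) ^ 2 - (Real.sin (t / 2) : ℂ) ^ 2)) *
    Complex.inv_ofReal_sqrt_two_sq -
    (1 - 2 * p) * Complex.ofReal_cos_eq_cos_half_sq_sub_sin_half_sq t

theorem masked_mixture_of_noncommuting_states_entangled_general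
    (θ : ℝ) (hθ : θ ∈ Set.Ico (0 : ℝ) (Real.pi / 2))
    (p : ℝ) (hp' : p ≠ 1/2) :
    ¬ Separable4 (kappa' θ p) := by
  intro hsep
  have hΓ := hsep.posSemidef_partialTranspose
  have hcos : 0 < Real.cos θ :=
    Real.cos_pos_of_mem_Ioo ⟨by linarith [Real.pi_pos, hθ.1], hθ.2⟩
  rcases hp'.lt_or_gt with hlt | hgt
  · have h := hΓ.dotProduct_mulVec_nonneg phiMinus
    rw [dotProduct_partialTranspose_kappa'_phiMinus, Complex.zero_le_real] at h
    nlinarith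
  · have h := hΓ.dotProduct_mulVec_nonneg psiMinus
    rw [dotProduct_partialTranspose_kappa'_psiMinus, Complex.zero_le_real] at h
    nlinarith

/-- the masked mixture κ'(p) of the two non-commuting masked states is
entangled (not separable) for every p ≠ 1/2 and every θ ∈ [0, π/2). -/
theorem masked_mixture_of_noncommuting_states_entangled
    (θ : ℝ) (hθ : θ ∈ Set.Ico (0 : ℝ) (Real.pi / 2))
    (p : ℝ) (hp : p ∈ Set.Icc (0 : ℝ) 1) (hp' : p ≠ 1/2) :
    ¬ Separable4 (kappa' θ p) :=
  masked_mixture_of_noncommuting_states_entangled_general θ hθ p hp'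

end
end
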